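/- Define f₁(τ) = τ/12 - (1/(2π))·log 2 - (1/π)·Σ_{n=1}^∞ log(1 + e^{-2πnτ}) for τ > 0. Then f₁ is strictly increasing and there exists τ₁ > 0 with f₁(τ₁) = 0; moreover f₁(τ) → +∞ as τ → +∞. -/

import Mathlib

/-- f₁(τ) = τ/12 - log 2/(2π) - (1/π) Σ_{n=1}^∞ log(1 + e^{-2πnτ}). -/
noncomputable def fOne (τ : ℝ) : ℝ :=
  τ / 12 - (1 / (2 * Real.pi)) * Real.log 2
    - (1 / Real.pi) * ∑' n : ℕ, Real.log (1 + Real.exp (-2 * Real.pi * ((n : ℝ) + 1) * τ))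

/-!
With `q = exp (-2πτ)` the series is `S q = ∑ log (1 + qⁿ)`, the logarithm of `∏ (1 + qⁿ)`, which is
nonnegative, monotone and continuous in `q ∈ [0, 1)` because `log (1 + x) ≤ x`. So `f₁` is the
strictly increasing `τ / 12` minus a constant minus the nonincreasing `S (exp (-2πτ)) / π`, and
`f₁ τ ≥ τ / 12 - log 2 / (2π) - S (exp (-2π)) / π` for `τ ≥ 1` tends to `+∞`. Since `π < 6 log 2`,
`f₁ 1 ≤ 1 / 12 - log 2 / (2π) < 0`, and the intermediate value theorem gives the zero.
-/

open Real Filter Set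

noncomputable def logProdOneAddPow (q : ℝ) : ℝ := ∑' n : ℕ, log (1 + q ^ (n + 1))

section LogProdOneAddPow

variable {p q : ℝ}

lemma log_one_add_pow_nonneg (hq : 0 ≤ q) (n : ℕ) : 0 ≤ log (1 + q ^ (n + 1)) :=
  log_nonneg (le_add_of_nonneg_right (pow_nonneg hq _))

lemma log_one_add_pow_le (hq : 0 ≤ q) (n : ℕ) : log (1 + q ^ (n + 1)) ≤ q ^ (n + 1) := by
  linarith [log_le_sub_one_of_pos (x := 1 + q ^ (n + 1)) (by positivity)]

lemma summable_pow_succ (hq₀ : 0 ≤ q) (hq₁ : q < 1) : Summable fun n : ℕ => q ^ (n + 1) :=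
  (summable_nat_add_iff 1).mpr (summable_geometric_of_lt_one hq₀ hq₁)

lemma summable_log_one_add_pow (hq₀ : 0 ≤ q) (hq₁ : q < 1) :
    Summable fun n : ℕ => log (1 + q ^ (n + 1)) :=
  .of_nonneg_of_le (log_one_add_pow_nonneg hq₀) (log_one_add_pow_le hq₀)
    (summable_pow_succ hq₀ hq₁)

lemma logProdOneAddPow_nonneg (hq : 0 ≤ q) : 0 ≤ logProdOneAddPow q :=
  tsum_nonneg (log_one_add_pow_nonneg hq)

lemma logProdOneAddPow_le_of_le (hp : 0 ≤ p) (hpq : p ≤ q) (hq₁ : q < 1) :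
    logProdOneAddPow p ≤ logProdOneAddPow q :=
  Summable.tsum_le_tsum (fun n => log_le_log (by positivity) (by gcongr))
    (summable_log_one_add_pow hp (hpq.trans_lt hq₁))
    (summable_log_one_add_pow (hp.trans hpq) hq₁)

lemma continuousOn_logProdOneAddPow {r : ℝ} (hr₀ : 0 ≤ r) (hr₁ : r < 1) :
    ContinuousOn logProdOneAddPow (Icc 0 r) := by
  refine continuousOn_tsum (fun n => ?_) (summable_pow_succ hr₀ hr₁) fun n q hq => ?_
  · exact ContinuousOn.log (by fun_prop) fun q hq => by have := hq.1; positivity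
  · rw [norm_of_nonneg (log_one_add_pow_nonneg hq.1 n)]
    exact (log_one_add_pow_le hq.1 n).trans (pow_le_pow_left₀ hq.1 hq.2 _)

end LogProdOneAddPow

section ExpNegTwoPiMul

variable {a b : ℝ}

lemma exp_neg_two_pi_mul_lt_one (ha : 0 < a) : exp (-2 * π * a) < 1 :=
  exp_lt_one_iff.mpr (by nlinarith [pi_pos])

lemma exp_neg_two_pi_mul_le_of_le (hab : a ≤ b) : exp (-2 * π * b) ≤ exp (-2 * π * a) :=
  exp_le_exp.mpr (by nlinarith [pi_pos])

end ExpNegTwoPiMul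

lemma fOne_eq (τ : ℝ) :
    fOne τ = τ / 12 - log 2 / (2 * π) - logProdOneAddPow (exp (-2 * π * τ)) / π := by
  have hexp (n : ℕ) : exp (-2 * π * ((n : ℝ) + 1) * τ) = exp (-2 * π * τ) ^ (n + 1) := by
    rw [← exp_nat_mul]; push_cast; ring_nf
  simp only [fOne, logProdOneAddPow, hexp]
  ring

lemma fOne_strictMonoOn : StrictMonoOn fOne (Ioi 0) := by
  intro a ha b _ hab
  have hS := logProdOneAddPow_le_of_le (exp_pos _).le (exp_neg_two_pi_mul_le_of_le hab.le)
    (exp_neg_two_pi_mul_lt_one ha)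
  rw [fOne_eq, fOne_eq]
  linarith [div_le_div_of_nonneg_right hS pi_pos.le]

lemma tendsto_fOne_atTop : Tendsto fOne atTop atTop := by
  refine tendsto_atTop_mono' atTop (f₁ := fun τ => τ / 12 -
    (log 2 / (2 * π) + logProdOneAddPow (exp (-2 * π * 1)) / π)) ?_
    (tendsto_atTop_add_const_right _ _ (tendsto_id.atTop_div_const (by norm_num)))
  filter_upwards [eventually_ge_atTop 1] with τ hτ
  have hS := logProdOneAddPow_le_of_le (exp_pos _).le (exp_neg_two_pi_mul_le_of_le hτ)
    (exp_neg_two_pi_mul_lt_one one_pos)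
  rw [fOne_eq]
  linarith [div_le_div_of_nonneg_right hS pi_pos.le]

lemma continuousOn_fOne {a : ℝ} (ha : 0 < a) : ContinuousOn fOne (Ici a) := by
  have hq : MapsTo (fun τ => exp (-2 * π * τ)) (Ici a) (Icc 0 (exp (-2 * π * a))) :=
    fun τ hτ => ⟨(exp_pos _).le, exp_neg_two_pi_mul_le_of_le hτ⟩
  have hS := (continuousOn_logProdOneAddPow (exp_pos _).le
    (exp_neg_two_pi_mul_lt_one ha)).comp (by fun_prop) hq
  rw [funext fOne_eq]
  exact ((continuousOn_id.div_const _).sub continuousOn_const).sub (hS.div_const _)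

lemma fOne_one_neg : fOne 1 < 0 := by
  have hπ : π < 6 * log 2 := by linarith [pi_lt_d2, log_two_gt_d9]
  have hlog : 1 / 12 < log 2 / (2 * π) := by
    rw [lt_div_iff₀ (by positivity)]; linarith
  rw [fOne_eq]
  linarith [div_nonneg (logProdOneAddPow_nonneg (exp_pos (-2 * π * 1)).le) pi_pos.le]

theorem fOne_props :
    StrictMonoOn fOne (Set.Ioi (0 : ℝ)) ∧
    (∃ τ₁ : ℝ, 0 < τ₁ ∧ fOne τ₁ = 0) ∧
    Filter.Tendsto fOne Filter.atTop Filter.atTop := by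
  refine ⟨fOne_strictMonoOn, ?_, tendsto_fOne_atTop⟩
  obtain ⟨T, hT, hT₁⟩ :=
    ((tendsto_fOne_atTop.eventually_gt_atTop 0).and (eventually_ge_atTop 1)).exists
  obtain ⟨τ₁, hτ₁, hzero⟩ := intermediate_value_Icc hT₁
    ((continuousOn_fOne one_pos).mono Icc_subset_Ici_self) ⟨fOne_one_neg.le, hT.le⟩
  exact ⟨τ₁, one_pos.trans_le hτ₁.1, hzero⟩
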